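/- arXiv:1909.11207 — 7 statements merged into one kernel-verified Lean document; each statement's English description precedes it below -/
import Mathlib

section
/- Let K ∈ ℝ^{n×n} be a symmetric positive semidefinite matrix, y ∈ ℝⁿ, and λ > 0. Then ‖K^{1/2}(K + nλ I_n)^{-1} y‖₂² ≤ ‖y‖₂² / (4nλ). -/
open Matrix

open scoped ComplexOrder in
/-- The positive semidefinite square root, as defined in the older Mathlib
(`Matrix.PosSemidef.sqrt`, removed since). -/
noncomputable def Matrix.PosSemidef.sqrt {n : Type*} [Fintype n] [DecidableEq n]
    {𝕜 : Type*} [RCLike 𝕜] {A : Matrix n n 𝕜} (hA : A.PosSemidef) : Matrix n n 𝕜 :=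
  (hA.1.eigenvectorUnitary : Matrix n n 𝕜) *
    diagonal ((RCLike.ofReal ∘ Real.sqrt ∘ hA.1.eigenvalues : n → 𝕜)) *
    (star hA.1.eigenvectorUnitary : Matrix n n 𝕜)

/-! With `c = nλ` and `x = (K + cI)⁻¹ y` the claim reads `4c · xᵀKx ≤ ‖(K + cI)x‖²`, since
`‖K^{1/2}x‖² = xᵀKx`. This holds for every symmetric `K` because
`(K + cI)² = (K - cI)² + 4cK`, the matrix form of `(a + c)² ≥ 4ac`. -/

namespace Matrix

section Sqrt

open scoped ComplexOrder

variable {n 𝕜 : Type*} [Fintype n] [DecidableEq n] [RCLike 𝕜] {A : Matrix n n 𝕜}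

lemma PosSemidef.isHermitian_sqrt (hA : A.PosSemidef) : hA.sqrt.IsHermitian := by
  simp only [IsHermitian, PosSemidef.sqrt, conjTranspose_mul, star_eq_conjTranspose,
    conjTranspose_conjTranspose, diagonal_conjTranspose, Matrix.mul_assoc]
  congr 3
  funext i
  simp

lemma PosSemidef.sqrt_mul_self (hA : A.PosSemidef) : hA.sqrt * hA.sqrt = A := by
  have hU : star (hA.1.eigenvectorUnitary : Matrix n n 𝕜) * hA.1.eigenvectorUnitary = 1 :=
    Unitary.star_mul_self_of_mem hA.1.eigenvectorUnitary.2
  conv_rhs => rw [hA.1.spectral_theorem, Unitary.conjStarAlgAut_apply]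
  simp only [PosSemidef.sqrt, Matrix.mul_assoc]
  rw [← Matrix.mul_assoc (star _), hU, Matrix.one_mul, ← Matrix.mul_assoc (diagonal _),
    diagonal_mul_diagonal]
  congr 3
  funext i
  simp [← RCLike.ofReal_mul, Real.mul_self_sqrt (hA.eigenvalues_nonneg i)]

end Sqrt

variable {n : Type*} [Fintype n]

lemma IsSymm.dotProduct_mul_self_mulVec {R : Type*} [CommSemiring R] {B : Matrix n n R}
    (hB : B.IsSymm) (x : n → R) : x ⬝ᵥ ((B * B) *ᵥ x) = (B *ᵥ x) ⬝ᵥ (B *ᵥ x) := by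
  have hvec : x ᵥ* B = B *ᵥ x := by simpa only [hB.eq] using vecMul_transpose B x
  rw [← mulVec_mulVec, dotProduct_mulVec, hvec]

variable [DecidableEq n]

lemma PosSemidef.sqrt_mulVec_dotProduct_self {K : Matrix n n ℝ} (hK : K.PosSemidef)
    (x : n → ℝ) : (hK.sqrt *ᵥ x) ⬝ᵥ (hK.sqrt *ᵥ x) = x ⬝ᵥ (K *ᵥ x) := by
  rw [← (isHermitian_iff_isSymm.mp hK.isHermitian_sqrt).dotProduct_mul_self_mulVec,
    hK.sqrt_mul_self]

lemma IsSymm.four_mul_dotProduct_mulVec_le {K : Matrix n n ℝ} (hK : K.IsSymm) (c : ℝ)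
    (x : n → ℝ) :
    4 * c * (x ⬝ᵥ (K *ᵥ x)) ≤ ((K + c • 1) *ᵥ x) ⬝ᵥ ((K + c • 1) *ᵥ x) := by
  have hsq : (K + c • 1) * (K + c • 1) = (K - c • 1) * (K - c • 1) + (4 * c) • K := by
    simp only [Matrix.add_mul, Matrix.mul_add, Matrix.sub_mul, Matrix.mul_sub,
      Matrix.smul_mul, Matrix.mul_smul, Matrix.mul_one, Matrix.one_mul]
    module
  rw [← (hK.add (isSymm_one.smul c)).dotProduct_mul_self_mulVec, hsq, add_mulVec,
    dotProduct_add, (hK.sub (isSymm_one.smul c)).dotProduct_mul_self_mulVec, smul_mulVec,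
    dotProduct_smul, smul_eq_mul, le_add_iff_nonneg_left]
  exact Finset.sum_nonneg fun i _ => mul_self_nonneg _

end Matrix

/-- ‖K^{1/2}(K + nλ I)⁻¹ y‖₂² ≤ ‖y‖₂² / (4nλ) for K symmetric PSD. -/
theorem sqrt_reg_quad_bound {n : ℕ} (hn : 0 < n)
    {K : Matrix (Fin n) (Fin n) ℝ} (hK : K.PosSemidef)
    (y : Fin n → ℝ) (lam : ℝ) (hlam : 0 < lam) :
    (hK.sqrt *ᵥ ((K + ((n : ℝ) * lam) • (1 : Matrix (Fin n) (Fin n) ℝ))⁻¹ *ᵥ y)) ⬝ᵥ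
        (hK.sqrt *ᵥ ((K + ((n : ℝ) * lam) • (1 : Matrix (Fin n) (Fin n) ℝ))⁻¹ *ᵥ y)) ≤
      (y ⬝ᵥ y) / (4 * n * lam) := by
  set c : ℝ := n * lam
  have hc : 0 < c := by positivity
  set M : Matrix (Fin n) (Fin n) ℝ := K + c • 1
  have hM : M.PosDef := PosDef.posSemidef_add hK (PosDef.one.smul hc)
  have hy : M *ᵥ (M⁻¹ *ᵥ y) = y := by
    rw [mulVec_mulVec, mul_nonsing_inv M ((isUnit_iff_isUnit_det M).mp hM.isUnit),
      one_mulVec]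
  have key :=
    (isHermitian_iff_isSymm.mp hK.isHermitian).four_mul_dotProduct_mulVec_le c (M⁻¹ *ᵥ y)
  rw [hy] at key
  rw [hK.sqrt_mulVec_dotProduct_self, le_div_iff₀ (by positivity)]
  linarith
end

section
/- Let v_1,…,v_s be i.i.d. random feature vectors and ψ a feature map satisfying Assumption 1 with constant b (unbiased: E_v[ψ(x;v)ψ(x';v)] = κ(x,x'); bounded: ψ²(·;·) ≤ b almost surely). For fixed data points x_1,…,x_n with kernel matrix K_{ij} = κ(x_i,x_j), let Ψ ∈ ℝ^{n×s} have entries Ψ_{il} = (1/√s)ψ(x_i; v_l). Then E_{V_s}[ΨΨᵀΨΨᵀ] ⪯ ((s−1)/s)·K² + (nb/s)·K in the Loewner order. -/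
/-!
Write φ(v) = (ψ(x_i; v))_i, so that Ψ = s^{-1/2} [φ(v_1) ⋯ φ(v_s)] and
(ΨΨᵀΨΨᵀ)_{ij} = s⁻² Σ_{l,m} φ_i(v_l) ⟨φ(v_l), φ(v_m)⟩ φ_j(v_m). By independence, each of the
s(s-1) terms with l ≠ m has expectation (K²)_{ij}, while each of the s terms with l = m has
expectation E[‖φ‖² φ_i φ_j]. Hence E[ΨΨᵀΨΨᵀ] = ((s-1)/s) K² + s⁻¹ E[‖φ‖² φφᵀ], and since
‖φ‖² ≤ nb almost surely, E[‖φ‖² φφᵀ] ⪯ nb E[φφᵀ] = nb K.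
-/

open MeasureTheory Matrix

noncomputable section

/-- Kernel matrix of the fixed points. -/
noncomputable def kerMat {d n : ℕ} (κ : (Fin d → ℝ) → (Fin d → ℝ) → ℝ)
    (X : Fin n → (Fin d → ℝ)) : Matrix (Fin n) (Fin n) ℝ :=
  Matrix.of fun i j => κ (X i) (X j)

/-- Random feature matrix Ψ ∈ ℝ^{n×s} with entries (1/√s)ψ(x_i; v_l). -/
noncomputable def featMat {d n s : ℕ} {V : Type*} (ψ : (Fin d → ℝ) → V → ℝ)
    (X : Fin n → (Fin d → ℝ)) (vs : Fin s → V) : Matrix (Fin n) (Fin s) ℝ :=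
  Matrix.of fun i l => (Real.sqrt s)⁻¹ * ψ (X i) (vs l)

open ProbabilityTheory

section Sampling

variable {V σ : Type*} [MeasurableSpace V] [Fintype σ] {p : Measure V} [IsProbabilityMeasure p]

lemma indepFun_comp_eval {l m : σ} (hlm : l ≠ m) {f g : V → ℝ} (hf : Measurable f)
    (hg : Measurable g) :
    IndepFun (fun vs => f (vs l)) (fun vs => g (vs m)) (Measure.pi fun _ => p) :=
  ((iIndepFun_pi (X := fun _ => id) fun _ => aemeasurable_id).indepFun hlm).comp hf hg

lemma integral_comp_eval_mul_comp_eval {l m : σ} (hlm : l ≠ m) {f g : V → ℝ}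
    (hf : Measurable f) (hg : Measurable g) :
    ∫ vs, f (vs l) * g (vs m) ∂Measure.pi (fun _ => p) = (∫ v, f v ∂p) * ∫ v, g v ∂p := by
  rw [(indepFun_comp_eval hlm hf hg).integral_fun_mul_eq_mul_integral
      (hf.comp (measurable_pi_apply l)).aestronglyMeasurable
      (hg.comp (measurable_pi_apply m)).aestronglyMeasurable,
    integral_comp_eval hf.aestronglyMeasurable, integral_comp_eval hg.aestronglyMeasurable]

lemma integrable_comp_eval_mul_comp_eval {l m : σ} (hlm : l ≠ m) {f g : V → ℝ}
    (hf : Measurable f) (hg : Measurable g) (hfi : Integrable f p) (hgi : Integrable g p) :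
    Integrable (fun vs => f (vs l) * g (vs m)) (Measure.pi fun _ => p) :=
  (indepFun_comp_eval hlm hf hg).integrable_mul (integrable_comp_eval hfi)
    (integrable_comp_eval hgi)

end Sampling

section MomentMatrix

variable {V ι : Type*} [MeasurableSpace V] {p : Measure V}

def momentMatrix (p : Measure V) (w : V → ℝ) (φ : V → ι → ℝ) : Matrix ι ι ℝ :=
  of fun i j => ∫ v, w v * φ v i * φ v j ∂p

variable {w w' : V → ℝ} {φ : V → ι → ℝ}

lemma momentMatrix_isHermitian : (momentMatrix p w φ).IsHermitian := by
  ext i j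
  simp only [conjTranspose_apply, momentMatrix, of_apply, star_trivial, mul_right_comm]

lemma smul_momentMatrix (c : ℝ) :
    c • momentMatrix p w φ = momentMatrix p (fun v => c * w v) φ := by
  ext i j
  simp only [momentMatrix, Matrix.smul_apply, of_apply, smul_eq_mul, ← integral_const_mul,
    mul_assoc]

lemma momentMatrix_sub (hint : ∀ i j, Integrable (fun v => w v * φ v i * φ v j) p)
    (hint' : ∀ i j, Integrable (fun v => w' v * φ v i * φ v j) p) :
    momentMatrix p w φ - momentMatrix p w' φ = momentMatrix p (fun v => w v - w' v) φ := by
  ext i j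
  simp only [momentMatrix, Matrix.sub_apply, of_apply, ← integral_sub (hint i j) (hint' i j),
    sub_mul]

variable [Fintype ι]

lemma dotProduct_momentMatrix_mulVec (hint : ∀ i j, Integrable (fun v => w v * φ v i * φ v j) p)
    (x : ι → ℝ) : x ⬝ᵥ (momentMatrix p w φ *ᵥ x) = ∫ v, w v * (x ⬝ᵥ φ v) ^ 2 ∂p := by
  have hsq (v : V) : w v * (x ⬝ᵥ φ v) ^ 2 = ∑ i, ∑ j, x i * (w v * φ v i * φ v j) * x j := by
    simp only [dotProduct, sq, Finset.sum_mul, Finset.mul_sum]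
    exact Finset.sum_congr rfl fun i _ => Finset.sum_congr rfl fun j _ => by ring
  simp_rw [hsq]
  rw [integral_finsetSum _ fun i _ => integrable_finsetSum _ fun j _ =>
    ((hint i j).const_mul _).mul_const _]
  refine Finset.sum_congr rfl fun i _ => ?_
  rw [integral_finsetSum _ fun j _ => ((hint i j).const_mul _).mul_const _, mulVec,
    dotProduct, Finset.mul_sum]
  refine Finset.sum_congr rfl fun j _ => ?_
  rw [integral_mul_const, integral_const_mul, momentMatrix, of_apply, mul_assoc]

lemma momentMatrix_posSemidef (hw : 0 ≤ᵐ[p] w)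
    (hint : ∀ i j, Integrable (fun v => w v * φ v i * φ v j) p) :
    (momentMatrix p w φ).PosSemidef := by
  refine .of_dotProduct_mulVec_nonneg momentMatrix_isHermitian fun x => ?_
  rw [star_trivial, dotProduct_momentMatrix_mulVec hint]
  exact integral_nonneg_of_ae (hw.mono fun v hv => mul_nonneg hv (sq_nonneg _))

lemma momentMatrix_sub_posSemidef (hle : w ≤ᵐ[p] w')
    (hint : ∀ i j, Integrable (fun v => w v * φ v i * φ v j) p)
    (hint' : ∀ i j, Integrable (fun v => w' v * φ v i * φ v j) p) :
    (momentMatrix p w' φ - momentMatrix p w φ).PosSemidef := by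
  rw [momentMatrix_sub hint' hint]
  refine momentMatrix_posSemidef (hle.mono fun v hv => sub_nonneg.2 hv) fun i j => ?_
  simpa only [sub_mul, Pi.sub_def] using (hint' i j).sub (hint i j)

omit [MeasurableSpace V] in
lemma abs_mul_le_dotProduct_self (x : ι → ℝ) (i j : ι) : |x i * x j| ≤ x ⬝ᵥ x := by
  have hsq (k : ι) : x k ^ 2 ≤ x ⬝ᵥ x := by
    simpa only [dotProduct, sq] using
      Finset.single_le_sum (fun l _ => mul_self_nonneg (x l)) (Finset.mem_univ k)
  rw [abs_mul]
  nlinarith [two_mul_le_add_sq |x i| |x j|, sq_abs (x i), sq_abs (x j), hsq i, hsq j]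

lemma integrable_mul_mul_of_ae_bound [IsFiniteMeasure p] (hw : AEStronglyMeasurable w p)
    (hφ : Measurable φ) {C B : ℝ} (hwC : ∀ᵐ v ∂p, |w v| ≤ C) (hφB : ∀ᵐ v ∂p, φ v ⬝ᵥ φ v ≤ B)
    (i j : ι) : Integrable (fun v => w v * φ v i * φ v j) p := by
  refine .of_bound (by fun_prop) (C * B) ?_
  filter_upwards [hwC, hφB] with v hwv hφv
  rw [Real.norm_eq_abs, mul_assoc, abs_mul]
  exact mul_le_mul hwv ((abs_mul_le_dotProduct_self _ i j).trans hφv) (abs_nonneg _)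
    ((abs_nonneg _).trans hwv)

end MomentMatrix

lemma smul_mul_transpose_mul_mul_transpose {m k : Type*} [Fintype m] [Fintype k] (c : ℝ)
    (A : Matrix m k ℝ) :
    c • A * (c • A)ᵀ * (c • A) * (c • A)ᵀ = (c ^ 2) ^ 2 • (A * Aᵀ * A * Aᵀ) := by
  simp only [transpose_smul, Matrix.smul_mul, Matrix.mul_smul, smul_smul]
  ring_nf

lemma mul_dotProduct_mul_eq_sum {ι : Type*} [Fintype ι] (x y : ι → ℝ) (i j : ι) :
    x i * (x ⬝ᵥ y) * y j = ∑ k, (x i * x k) * (y k * y j) := by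
  simp only [dotProduct, Finset.mul_sum, Finset.sum_mul]
  exact Finset.sum_congr rfl fun k _ => by ring

section SampleMatrix

variable {V ι σ : Type*} [Fintype ι] [Fintype σ]

def sampleMatrix (φ : V → ι → ℝ) (vs : σ → V) : Matrix ι σ ℝ :=
  of fun i l => φ (vs l) i

lemma sampleMatrix_fourth_apply (φ : V → ι → ℝ) (vs : σ → V) (i j : ι) :
    (sampleMatrix φ vs * (sampleMatrix φ vs)ᵀ * sampleMatrix φ vs * (sampleMatrix φ vs)ᵀ) i j =
      ∑ l, ∑ m, φ (vs l) i * (φ (vs l) ⬝ᵥ φ (vs m)) * φ (vs m) j := by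
  rw [Matrix.mul_assoc (sampleMatrix φ vs), mul_apply, Finset.sum_comm]
  simp only [mul_apply, transpose_apply, sampleMatrix, of_apply, dotProduct, Finset.sum_mul,
    Finset.mul_sum]

variable [MeasurableSpace V] {p : Measure V} [IsProbabilityMeasure p] {φ : V → ι → ℝ}

lemma integral_sampleTerm_self (hφ : Measurable φ) (l : σ) (i j : ι) :
    ∫ vs, φ (vs l) i * (φ (vs l) ⬝ᵥ φ (vs l)) * φ (vs l) j ∂Measure.pi (fun _ => p) =
      momentMatrix p (fun v => φ v ⬝ᵥ φ v) φ i j := by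
  refine (integral_comp_eval (μ := fun _ : σ => p) (i := l)
    (f := fun v => φ v i * (φ v ⬝ᵥ φ v) * φ v j) (by fun_prop)).trans ?_
  simp only [momentMatrix, of_apply, mul_comm (φ _ i)]

lemma integral_sampleTerm_of_ne (hφ : Measurable φ)
    (h2 : ∀ i j, Integrable (fun v => φ v i * φ v j) p) {l m : σ} (hlm : l ≠ m) (i j : ι) :
    ∫ vs, φ (vs l) i * (φ (vs l) ⬝ᵥ φ (vs m)) * φ (vs m) j ∂Measure.pi (fun _ => p) =
      (momentMatrix p 1 φ * momentMatrix p 1 φ) i j := by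
  simp_rw [mul_dotProduct_mul_eq_sum]
  rw [integral_finsetSum _ fun k _ => integrable_comp_eval_mul_comp_eval hlm
    (by fun_prop) (by fun_prop) (h2 i k) (h2 k j)]
  refine Finset.sum_congr rfl fun k _ => ?_
  rw [integral_comp_eval_mul_comp_eval hlm (f := fun v => φ v i * φ v k)
    (g := fun v => φ v k * φ v j) (by fun_prop) (by fun_prop)]
  simp only [momentMatrix, of_apply, Pi.one_apply, one_mul]

lemma integrable_sampleTerm (hφ : Measurable φ)
    (h2 : ∀ i j, Integrable (fun v => φ v i * φ v j) p)
    (h4 : ∀ i j, Integrable (fun v => (φ v ⬝ᵥ φ v) * φ v i * φ v j) p) (l m : σ) (i j : ι) :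
    Integrable (fun vs => φ (vs l) i * (φ (vs l) ⬝ᵥ φ (vs m)) * φ (vs m) j)
      (Measure.pi fun _ => p) := by
  obtain rfl | hlm := eq_or_ne l m
  · simpa only [mul_comm (φ _ i)] using integrable_comp_eval (μ := fun _ : σ => p) (i := l) (h4 i j)
  · simp_rw [mul_dotProduct_mul_eq_sum]
    exact integrable_finsetSum _ fun k _ => integrable_comp_eval_mul_comp_eval hlm
      (by fun_prop) (by fun_prop) (h2 i k) (h2 k j)

lemma integral_sampleMatrix_fourth (hφ : Measurable φ)
    (h2 : ∀ i j, Integrable (fun v => φ v i * φ v j) p)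
    (h4 : ∀ i j, Integrable (fun v => (φ v ⬝ᵥ φ v) * φ v i * φ v j) p) :
    of (fun i j => ∫ vs, (sampleMatrix φ vs * (sampleMatrix φ vs)ᵀ * sampleMatrix φ vs *
        (sampleMatrix φ vs)ᵀ) i j ∂Measure.pi (fun _ : σ => p)) =
      Fintype.card σ • momentMatrix p (fun v => φ v ⬝ᵥ φ v) φ +
        (Fintype.card σ * (Fintype.card σ - 1)) • (momentMatrix p 1 φ * momentMatrix p 1 φ) := by
  classical
  ext i j
  have hterm := integrable_sampleTerm (σ := σ) hφ h2 h4
  have hrow (l : σ) :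
      ∑ m, ∫ vs, φ (vs l) i * (φ (vs l) ⬝ᵥ φ (vs m)) * φ (vs m) j ∂Measure.pi (fun _ => p) =
        momentMatrix p (fun v => φ v ⬝ᵥ φ v) φ i j +
          (Fintype.card σ - 1) • (momentMatrix p 1 φ * momentMatrix p 1 φ) i j := by
    rw [← Finset.add_sum_erase _ _ (Finset.mem_univ l), integral_sampleTerm_self hφ,
      Finset.sum_congr rfl fun m hm => integral_sampleTerm_of_ne hφ h2
        (Finset.ne_of_mem_erase hm).symm i j,
      Finset.sum_const, Finset.card_erase_of_mem (Finset.mem_univ l), Finset.card_univ]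
  simp only [of_apply, sampleMatrix_fourth_apply]
  rw [integral_finsetSum _ fun l _ => integrable_finsetSum _ fun m _ => hterm l m i j,
    Finset.sum_congr rfl fun l _ => integral_finsetSum _ fun m _ => hterm l m i j,
    Finset.sum_congr rfl fun l _ => hrow l]
  simp only [Finset.sum_add_distrib, Finset.sum_const, Finset.card_univ, Matrix.add_apply,
    Matrix.smul_apply, smul_smul]

lemma integral_smul_sampleMatrix_fourth {s : ℕ} (hs : 0 < s) (hφ : Measurable φ)
    (h2 : ∀ i j, Integrable (fun v => φ v i * φ v j) p)
    (h4 : ∀ i j, Integrable (fun v => (φ v ⬝ᵥ φ v) * φ v i * φ v j) p) :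
    of (fun i j => ∫ vs, ((√s)⁻¹ • sampleMatrix φ vs * ((√s)⁻¹ • sampleMatrix φ vs)ᵀ *
        ((√s)⁻¹ • sampleMatrix φ vs) * ((√s)⁻¹ • sampleMatrix φ vs)ᵀ) i j
          ∂Measure.pi (fun _ : Fin s => p)) =
      (((s : ℝ) - 1) / s) • (momentMatrix p 1 φ * momentMatrix p 1 φ) +
        (s : ℝ)⁻¹ • momentMatrix p (fun v => φ v ⬝ᵥ φ v) φ := by
  have hsq : (√(s : ℝ))⁻¹ ^ 2 = (s : ℝ)⁻¹ := by rw [inv_pow, Real.sq_sqrt (Nat.cast_nonneg s)]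
  ext i j
  have hΦ := congr_fun₂ (integral_sampleMatrix_fourth (σ := Fin s) hφ h2 h4) i j
  simp only [of_apply, Matrix.add_apply, Matrix.smul_apply] at hΦ ⊢
  simp only [smul_mul_transpose_mul_mul_transpose, hsq, Matrix.smul_apply, smul_eq_mul,
    integral_const_mul, hΦ, Fintype.card_fin, nsmul_eq_mul, Nat.cast_mul, Nat.cast_sub hs,
    Nat.cast_one]
  have hs' : (s : ℝ) ≠ 0 := by positivity
  field_simp
  ring

end SampleMatrix

lemma featMat_eq_smul_sampleMatrix {d n s : ℕ} {V : Type*} (ψ : (Fin d → ℝ) → V → ℝ)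
    (X : Fin n → (Fin d → ℝ)) (vs : Fin s → V) :
    featMat ψ X vs = (√s)⁻¹ • sampleMatrix (fun v i => ψ (X i) v) vs :=
  rfl

theorem fourth_moment_loewner_bound_general
    {d n s : ℕ} (hs : 0 < s) {V : Type*} [MeasurableSpace V]
    (p : Measure V) [IsProbabilityMeasure p]
    (ψ : (Fin d → ℝ) → V → ℝ) (hm : ∀ x, Measurable (ψ x))
    (κ : (Fin d → ℝ) → (Fin d → ℝ) → ℝ)
    (b : ℝ)
    (hunbias : ∀ x x', ∫ v, ψ x v * ψ x' v ∂p = κ x x')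
    (hbound : ∀ᵐ v ∂p, ∀ x, (ψ x v) ^ 2 ≤ b)
    (X : Fin n → (Fin d → ℝ)) :
    ((((s : ℝ) - 1) / s) • (kerMat κ X * kerMat κ X) +
        ((n : ℝ) * b / s) • kerMat κ X -
      Matrix.of (fun i j =>
        ∫ vs : Fin s → V,
          (featMat ψ X vs * (featMat ψ X vs)ᵀ * featMat ψ X vs *
              (featMat ψ X vs)ᵀ) i j
          ∂(Measure.pi fun _ : Fin s => p))).PosSemidef := by
  simp only [featMat_eq_smul_sampleMatrix]
  set φ : V → Fin n → ℝ := fun v i => ψ (X i) v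
  have hφ : Measurable φ := measurable_pi_lambda _ fun i => hm (X i)
  have hφB : ∀ᵐ v ∂p, φ v ⬝ᵥ φ v ≤ n * b := hbound.mono fun v hv => by
    simpa only [dotProduct, ← sq, Finset.sum_const, Finset.card_univ, Fintype.card_fin,
      nsmul_eq_mul] using Finset.sum_le_sum fun i (_ : i ∈ Finset.univ) => hv (X i)
  have hint {w : V → ℝ} (hw : AEStronglyMeasurable w p) {C : ℝ} (hwC : ∀ᵐ v ∂p, |w v| ≤ C) :=
    integrable_mul_mul_of_ae_bound hw hφ hwC hφB
  have hK : kerMat κ X = momentMatrix p 1 φ := by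
    ext i j
    simp only [kerMat, momentMatrix, of_apply, Pi.one_apply, one_mul, φ, hunbias]
  have hφφ : ∀ i j, Integrable (fun v => φ v i * φ v j) p := by
    simpa only [Pi.one_apply, one_mul] using hint (w := 1) (C := 1) (by fun_prop) (by simp)
  have hT := hint (w := fun v => φ v ⬝ᵥ φ v) (by fun_prop)
    (hφB.mono fun v hv => (abs_of_nonneg (dotProduct_self_star_nonneg _)).trans_le hv)
  rw [integral_smul_sampleMatrix_fourth hs hφ hφφ hT, hK, add_sub_add_left_eq_sub, div_eq_inv_mul,
    mul_smul, ← smul_sub, smul_momentMatrix]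
  refine (momentMatrix_sub_posSemidef (hφB.mono fun v hv => ?_) hT
    (hint (C := |(n : ℝ) * b|) (by fun_prop) (by simp))).smul (by positivity)
  simpa only [Pi.one_apply, mul_one] using hv

/-- Lemma 2: E_{V_s}[ΨΨᵀΨΨᵀ] ⪯ ((s−1)/s)·K² + (nb/s)·K. -/
theorem fourth_moment_loewner_bound
    {d n s : ℕ} (hs : 0 < s) {V : Type*} [MeasurableSpace V]
    (p : Measure V) [IsProbabilityMeasure p]
    (ψ : (Fin d → ℝ) → V → ℝ) (hm : ∀ x, Measurable (ψ x))
    (κ : (Fin d → ℝ) → (Fin d → ℝ) → ℝ)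
    (b : ℝ) (hb : 0 < b)
    (hunbias : ∀ x x', ∫ v, ψ x v * ψ x' v ∂p = κ x x')
    (hbound : ∀ᵐ v ∂p, ∀ x, (ψ x v) ^ 2 ≤ b)
    (X : Fin n → (Fin d → ℝ)) :
    ((((s : ℝ) - 1) / s) • (kerMat κ X * kerMat κ X) +
        ((n : ℝ) * b / s) • kerMat κ X -
      Matrix.of (fun i j =>
        ∫ vs : Fin s → V,
          (featMat ψ X vs * (featMat ψ X vs)ᵀ * featMat ψ X vs *
              (featMat ψ X vs)ᵀ) i j
          ∂(Measure.pi fun _ : Fin s => p))).PosSemidef :=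
  fourth_moment_loewner_bound_general hs p ψ hm κ b hunbias hbound X
end
end

section
/- Let v_1,…,v_s be i.i.d. random feature vectors and ψ a feature map satisfying Assumption 1 with constant b. For fixed points x_1,…,x_n and a fixed test point x', let K be the kernel matrix, k' ∈ ℝⁿ with k'_i = κ(x_i, x'), Ψ the random feature matrix, and k̃' = Ψ ψ(x'; V_s). Then E_{V_s}[ (k̃' − k')(k̃' − k')ᵀ ] ⪯ (b/s)·K − (1/s)·k'k'ᵀ in the Loewner order. -/
open MeasureTheory Matrix

noncomputable section

/-- Random feature vector ψ(x; V_s). -/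
noncomputable def featVec {d s : ℕ} {V : Type*} (ψ : (Fin d → ℝ) → V → ℝ)
    (vs : Fin s → V) (x : Fin d → ℝ) : Fin s → ℝ :=
  fun l => (Real.sqrt s)⁻¹ * ψ x (vs l)

/-- Approximate kernel vector k̃' = Ψ ψ(x'; V_s). -/
noncomputable def approxKerVec {d n s : ℕ} {V : Type*} (ψ : (Fin d → ℝ) → V → ℝ)
    (X : Fin n → (Fin d → ℝ)) (x' : Fin d → ℝ) (vs : Fin s → V) : Fin n → ℝ :=
  featMat ψ X vs *ᵥ featVec ψ vs x'

/-! The `i`-th entry of `k̃'` is the sample mean, over the `s` i.i.d. features, of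
`zᵢ(v) = ψ(xᵢ; v) ψ(x'; v)`, whose mean is `k'ᵢ`. Hence the expected outer product of the error
is the covariance of a sample mean, `(1/s) Cov(z) = (1/s) (E[z zᵀ] - k' k'ᵀ)`. Since `z` is the
feature vector `(ψ(xᵢ; v))ᵢ` scaled by `ψ(x'; v)` and `ψ(x'; v)² ≤ b`,
`E[z zᵀ] ⪯ b E[ψ ψᵀ] = b K`. -/

open ProbabilityTheory

section SampleMean

variable {ι Ω : Type*} [Fintype ι] [MeasurableSpace Ω] {μ : Measure Ω} [IsProbabilityMeasure μ]

def sampleMean (f : Ω → ℝ) (ω : ι → Ω) : ℝ :=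
  (Fintype.card ι : ℝ)⁻¹ * ∑ i, f (ω i)

lemma integral_sampleMean [Nonempty ι] {f : Ω → ℝ} (hf : Integrable f μ) :
    ∫ ω, sampleMean f ω ∂(Measure.pi fun _ : ι => μ) = ∫ v, f v ∂μ := by
  have hcomp (i : ι) : ∫ ω, f (ω i) ∂(Measure.pi fun _ : ι => μ) = ∫ v, f v ∂μ :=
    integral_comp_eval (μ := fun _ => μ) hf.aestronglyMeasurable
  simp only [sampleMean, integral_const_mul,
    integral_finsetSum _ fun i _ => integrable_comp_eval (μ := fun _ => μ) hf, hcomp,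
    Finset.sum_const, Finset.card_univ, nsmul_eq_mul]
  field_simp

lemma covariance_comp_eval {f g : Ω → ℝ} (hf : MemLp f 2 μ) (hg : MemLp g 2 μ) (i : ι) :
    cov[fun ω => f (ω i), fun ω => g (ω i); Measure.pi fun _ : ι => μ] = cov[f, g; μ] := by
  have hmap : (Measure.pi fun _ : ι => μ).map (fun ω => ω i) = μ :=
    (measurePreserving_eval (fun _ : ι => μ) i).map_eq
  rw [← covariance_map_fun (by rw [hmap]; exact hf.aestronglyMeasurable)
    (by rw [hmap]; exact hg.aestronglyMeasurable) (measurable_pi_apply i).aemeasurable, hmap]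

lemma indepFun_comp_eval_s6 {f g : Ω → ℝ} (hf : AEMeasurable f μ) (hg : AEMeasurable g μ) {i j : ι}
    (hij : i ≠ j) :
    IndepFun (fun ω => f (ω i)) (fun ω => g (ω j)) (Measure.pi fun _ : ι => μ) := by
  have hmap (k : ι) : (Measure.pi fun _ : ι => μ).map (fun ω => ω k) = μ :=
    (measurePreserving_eval (fun _ : ι => μ) k).map_eq
  exact ((iIndepFun_pi (X := fun _ => id) fun _ => aemeasurable_id).indepFun hij).comp₀
    (measurable_pi_apply i).aemeasurable (measurable_pi_apply j).aemeasurable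
    (by simpa only [id, hmap] using hf) (by simpa only [id, hmap] using hg)

lemma covariance_sum_comp_eval {f g : Ω → ℝ} (hf : MemLp f 2 μ) (hg : MemLp g 2 μ) :
    cov[fun ω => ∑ i, f (ω i), fun ω => ∑ i, g (ω i); Measure.pi fun _ : ι => μ]
      = Fintype.card ι * cov[f, g; μ] := by
  have hf' (i : ι) : MemLp (fun ω : ι → Ω => f (ω i)) 2 (Measure.pi fun _ => μ) :=
    hf.comp_measurePreserving (measurePreserving_eval _ i)
  have hg' (i : ι) : MemLp (fun ω : ι → Ω => g (ω i)) 2 (Measure.pi fun _ => μ) :=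
    hg.comp_measurePreserving (measurePreserving_eval _ i)
  rw [covariance_fun_sum_fun_sum hf' hg']
  have hdiag (i : ι) : ∑ j, cov[fun ω => f (ω i), fun ω => g (ω j); Measure.pi fun _ => μ]
      = cov[f, g; μ] := by
    refine (Finset.sum_eq_single i (fun j _ hji => ?_) (by simp)).trans
      (covariance_comp_eval hf hg i)
    exact (indepFun_comp_eval_s6 hf.aemeasurable hg.aemeasurable hji.symm).covariance_eq_zero
      (hf' i) (hg' j)
  simp only [hdiag, Finset.sum_const, Finset.card_univ, nsmul_eq_mul]

lemma covariance_sampleMean [Nonempty ι] {f g : Ω → ℝ} (hf : MemLp f 2 μ) (hg : MemLp g 2 μ) :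
    cov[sampleMean f, sampleMean g; Measure.pi fun _ : ι => μ]
      = (Fintype.card ι : ℝ)⁻¹ * cov[f, g; μ] := by
  unfold sampleMean
  rw [covariance_const_mul_left, covariance_const_mul_right, covariance_sum_comp_eval hf hg]
  field_simp

end SampleMean

lemma posSemidef_integral_weighted_gram {ι Ω : Type*} [Fintype ι] [MeasurableSpace Ω]
    {μ : Measure Ω} {w : Ω → ℝ} {φ : ι → Ω → ℝ} (hw : 0 ≤ᵐ[μ] w)
    (hint : ∀ i j, Integrable (fun ω => w ω * (φ i ω * φ j ω)) μ) :
    (Matrix.of fun i j => ∫ ω, w ω * (φ i ω * φ j ω) ∂μ).PosSemidef := by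
  refine .of_dotProduct_mulVec_nonneg ?_ fun u => ?_
  · ext i j
    simp only [conjTranspose_apply, of_apply, star_trivial, mul_comm (φ i _)]
  · have hquad : star u ⬝ᵥ ((Matrix.of fun i j => ∫ ω, w ω * (φ i ω * φ j ω) ∂μ) *ᵥ u)
        = ∫ ω, w ω * (∑ i, u i * φ i ω) ^ 2 ∂μ := by
      have hexpand (ω : Ω) : w ω * (∑ i, u i * φ i ω) ^ 2
          = ∑ i, ∑ j, u i * (w ω * (φ i ω * φ j ω) * u j) := by
        rw [sq, Finset.sum_mul_sum, Finset.mul_sum]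
        exact Finset.sum_congr rfl fun i _ => by
          rw [Finset.mul_sum]; exact Finset.sum_congr rfl fun j _ => by ring
      simp only [hexpand, dotProduct, mulVec, of_apply, star_trivial, Finset.mul_sum]
      rw [integral_finsetSum _ fun i _ => integrable_finsetSum _ fun j _ =>
        ((hint i j).mul_const _).const_mul _]
      refine Finset.sum_congr rfl fun i _ => ?_
      rw [integral_finsetSum _ fun j _ => ((hint i j).mul_const _).const_mul _]
      simp only [integral_const_mul, integral_mul_const]
    rw [hquad]
    exact integral_nonneg_of_ae (hw.mono fun ω hω => mul_nonneg hω (sq_nonneg _))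

lemma posSemidef_smul_gram_sub_gram_mul {ι Ω : Type*} [Fintype ι] [MeasurableSpace Ω]
    {μ : Measure Ω} {φ : ι → Ω → ℝ} {h : Ω → ℝ} {b : ℝ} (hh : ∀ᵐ ω ∂μ, h ω ^ 2 ≤ b)
    (hφ : ∀ i j, Integrable (fun ω => φ i ω * φ j ω) μ)
    (hhφ : ∀ i j, Integrable (fun ω => φ i ω * h ω * (φ j ω * h ω)) μ) :
    (b • (Matrix.of fun i j => ∫ ω, φ i ω * φ j ω ∂μ) -
      Matrix.of fun i j => ∫ ω, φ i ω * h ω * (φ j ω * h ω) ∂μ).PosSemidef := by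
  have hweight (i j : ι) : (fun ω => (b - h ω ^ 2) * (φ i ω * φ j ω))
      = fun ω => b * (φ i ω * φ j ω) - φ i ω * h ω * (φ j ω * h ω) :=
    funext fun ω => by ring
  have hM : b • (Matrix.of fun i j => ∫ ω, φ i ω * φ j ω ∂μ) -
      (Matrix.of fun i j => ∫ ω, φ i ω * h ω * (φ j ω * h ω) ∂μ)
      = Matrix.of fun i j => ∫ ω, (b - h ω ^ 2) * (φ i ω * φ j ω) ∂μ := by
    ext i j
    rw [of_apply, hweight, integral_sub ((hφ i j).const_mul b) (hhφ i j), integral_const_mul]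
    rfl
  rw [hM]
  exact posSemidef_integral_weighted_gram (hh.mono fun ω hω => sub_nonneg.2 hω) fun i j => by
    rw [hweight]
    exact ((hφ i j).const_mul b).sub (hhφ i j)

lemma abs_mul_le_of_sq_le {a c b : ℝ} (ha : a ^ 2 ≤ b) (hc : c ^ 2 ≤ b) : |a * c| ≤ b := by
  have hb : 0 ≤ b := (sq_nonneg a).trans ha
  refine abs_le_of_sq_le_sq ?_ hb
  rw [mul_pow, sq b]
  exact mul_le_mul ha hc (sq_nonneg c) hb

lemma memLp_mul_of_sq_le {Ω : Type*} [MeasurableSpace Ω] {μ : Measure Ω} [IsFiniteMeasure μ]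
    {f g : Ω → ℝ} {b : ℝ} (hf : AEStronglyMeasurable f μ) (hg : AEStronglyMeasurable g μ)
    (hfb : ∀ᵐ ω ∂μ, f ω ^ 2 ≤ b) (hgb : ∀ᵐ ω ∂μ, g ω ^ 2 ≤ b) {q : ENNReal} :
    MemLp (fun ω => f ω * g ω) q μ :=
  .of_bound (hf.mul hg) b <| by
    filter_upwards [hfb, hgb] with ω hfω hgω
    exact abs_mul_le_of_sq_le hfω hgω

lemma approxKerVec_apply {d n s : ℕ} {V : Type*} (ψ : (Fin d → ℝ) → V → ℝ)
    (X : Fin n → (Fin d → ℝ)) (x' : Fin d → ℝ) (vs : Fin s → V) (i : Fin n) :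
    approxKerVec ψ X x' vs i = sampleMean (fun v => ψ (X i) v * ψ x' v) vs := by
  have hsqrt : (Real.sqrt s)⁻¹ * (Real.sqrt s)⁻¹ = (s : ℝ)⁻¹ := by
    rw [← mul_inv, Real.mul_self_sqrt (Nat.cast_nonneg s)]
  simp only [approxKerVec, featMat, featVec, sampleMean, mulVec, dotProduct, of_apply,
    Fintype.card_fin, Finset.mul_sum, ← hsqrt]
  exact Finset.sum_congr rfl fun l _ => by ring

lemma integral_approxKerVec_sub_mul_sub {d n s : ℕ} (hs : 0 < s) {V : Type*}
    [MeasurableSpace V] {p : Measure V} [IsProbabilityMeasure p] {ψ : (Fin d → ℝ) → V → ℝ}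
    (hψ : ∀ x y, MemLp (fun v => ψ x v * ψ y v) 2 p) (X : Fin n → (Fin d → ℝ))
    (x' : Fin d → ℝ) (i j : Fin n) :
    ∫ vs, (approxKerVec ψ X x' vs i - ∫ v, ψ (X i) v * ψ x' v ∂p) *
        (approxKerVec ψ X x' vs j - ∫ v, ψ (X j) v * ψ x' v ∂p) ∂(Measure.pi fun _ : Fin s => p)
      = (s : ℝ)⁻¹ * cov[fun v => ψ (X i) v * ψ x' v, fun v => ψ (X j) v * ψ x' v; p] := by
  have : Nonempty (Fin s) := ⟨⟨0, hs⟩⟩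
  have hcov := covariance_sampleMean (ι := Fin s) (hψ (X i) x') (hψ (X j) x')
  rw [Fintype.card_fin] at hcov
  rw [← hcov, covariance]
  simp only [approxKerVec_apply, integral_sampleMean ((hψ _ _).integrable one_le_two)]

theorem ker_vec_variance_loewner_bound_general
    {d n s : ℕ} (hs : 0 < s) {V : Type*} [MeasurableSpace V]
    (p : Measure V) [IsProbabilityMeasure p]
    (ψ : (Fin d → ℝ) → V → ℝ) (hm : ∀ x, Measurable (ψ x))
    (κ : (Fin d → ℝ) → (Fin d → ℝ) → ℝ)
    (b : ℝ)
    (hunbias : ∀ x x', ∫ v, ψ x v * ψ x' v ∂p = κ x x')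
    (hbound : ∀ᵐ v ∂p, ∀ x, (ψ x v) ^ 2 ≤ b)
    (X : Fin n → (Fin d → ℝ)) (x' : Fin d → ℝ) :
    ((b / s) • kerMat κ X -
        ((s : ℝ))⁻¹ • vecMulVec (fun i => κ (X i) x') (fun i => κ (X i) x') -
      Matrix.of (fun i j =>
        ∫ vs : Fin s → V,
          (vecMulVec (approxKerVec ψ X x' vs - fun i' => κ (X i') x')
              (approxKerVec ψ X x' vs - fun i' => κ (X i') x')) i j
          ∂(Measure.pi fun _ : Fin s => p))).PosSemidef := by
  have hprod (x y : Fin d → ℝ) : MemLp (fun v => ψ x v * ψ y v) 2 p :=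
    memLp_mul_of_sq_le (hm x).aestronglyMeasurable (hm y).aestronglyMeasurable
      (hbound.mono fun _ hv => hv x) (hbound.mono fun _ hv => hv y)
  have hloewner := posSemidef_smul_gram_sub_gram_mul (φ := fun i => ψ (X i)) (b := b)
    (hbound.mono fun _ hv => hv x') (fun i j => (hprod _ _).integrable one_le_two)
    (fun i j => (hprod _ _).integrable_mul (hprod _ _))
  convert hloewner.smul (by positivity : (0 : ℝ) ≤ (s : ℝ)⁻¹) using 1
  ext i j
  simp only [Matrix.sub_apply, Matrix.smul_apply, of_apply, kerMat, vecMulVec_apply,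
    Pi.sub_apply, Pi.mul_apply, smul_eq_mul, ← hunbias, integral_approxKerVec_sub_mul_sub hs hprod,
    covariance_eq_sub (hprod _ _) (hprod _ _)]
  ring

/-- Lemma 3: E_{V_s}[(k̃'−k')(k̃'−k')ᵀ] ⪯ (b/s)·K − (1/s)·k'k'ᵀ. -/
theorem ker_vec_variance_loewner_bound
    {d n s : ℕ} (hs : 0 < s) {V : Type*} [MeasurableSpace V]
    (p : Measure V) [IsProbabilityMeasure p]
    (ψ : (Fin d → ℝ) → V → ℝ) (hm : ∀ x, Measurable (ψ x))
    (κ : (Fin d → ℝ) → (Fin d → ℝ) → ℝ)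
    (b : ℝ) (hb : 0 < b)
    (hunbias : ∀ x x', ∫ v, ψ x v * ψ x' v ∂p = κ x x')
    (hbound : ∀ᵐ v ∂p, ∀ x, (ψ x v) ^ 2 ≤ b)
    (X : Fin n → (Fin d → ℝ)) (x' : Fin d → ℝ) :
    ((b / s) • kerMat κ X -
        ((s : ℝ))⁻¹ • vecMulVec (fun i => κ (X i) x') (fun i => κ (X i) x') -
      Matrix.of (fun i j =>
        ∫ vs : Fin s → V,
          (vecMulVec (approxKerVec ψ X x' vs - fun i' => κ (X i') x')
              (approxKerVec ψ X x' vs - fun i' => κ (X i') x')) i j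
          ∂(Measure.pi fun _ : Fin s => p))).PosSemidef :=
  ker_vec_variance_loewner_bound_general hs p ψ hm κ b hunbias hbound X x'
end
end

section
/- Let K, K̃ ∈ ℝ^{n×n} be symmetric positive semidefinite, k', k̃', y ∈ ℝⁿ, and λ > 0. Then ( k̃'ᵀ(K̃ + nλI_n)^{-1}y − k'ᵀ(K + nλI_n)^{-1}y )² ≤ 2·‖(K̃ + nλI_n)^{-1}k̃'‖₂² · ‖(K̃ − K)(K + nλI_n)^{-1}y‖₂² + 2·( (k̃' − k')ᵀ(K + nλI_n)^{-1}y )². -/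
/-!
Write `S = K̃ + nλI` and `T = K + nλI`; both are positive definite, hence invertible.
The resolvent identity `S⁻¹ - T⁻¹ = S⁻¹ (T - S) T⁻¹` and the symmetry of `S⁻¹` split the
prediction difference as `b - a` with `a = (S⁻¹k̃')ᵀ (K̃ - K) T⁻¹y` and `b = (k̃' - k')ᵀ T⁻¹y`.
Then `(b - a)² ≤ 2a² + 2b²`, and Cauchy–Schwarz bounds `a²`.
-/

open Matrix

namespace Matrix

variable {n : Type*}

theorem dotProduct_sq_le_dotProduct_self_mul_dotProduct_self [Fintype n] {R : Type*} [CommRing R]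
    [LinearOrder R] [IsStrictOrderedRing R] (u v : n → R) :
    (u ⬝ᵥ v) ^ 2 ≤ (u ⬝ᵥ u) * (v ⬝ᵥ v) := by
  simpa only [dotProduct, sq] using Finset.sum_mul_sq_le_sq_mul_sq Finset.univ u v

theorem PosSemidef.posDef_add_smul_one [DecidableEq n] {M : Matrix n n ℝ} (hM : M.PosSemidef)
    {c : ℝ} (hc : 0 < c) : (M + c • (1 : Matrix n n ℝ)).PosDef :=
  PosDef.posSemidef_add hM (PosDef.one.smul hc)

theorem dotProduct_inv_mulVec_sub_dotProduct_inv_mulVec [Fintype n] [DecidableEq n]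
    {R : Type*} [CommRing R] {S T : Matrix n n R} (hST : IsUnit S ↔ IsUnit T) (hS : S.IsSymm)
    (k' k y : n → R) :
    k' ⬝ᵥ (S⁻¹ *ᵥ y) - k ⬝ᵥ (T⁻¹ *ᵥ y) =
      (k' - k) ⬝ᵥ (T⁻¹ *ᵥ y) - (S⁻¹ *ᵥ k') ⬝ᵥ ((S - T) *ᵥ (T⁻¹ *ᵥ y)) := by
  have resolvent : S⁻¹ - T⁻¹ = -(S⁻¹ * (S - T) * T⁻¹) := by
    rw [inv_sub_inv hST, ← neg_sub S T, Matrix.mul_neg, Matrix.neg_mul]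
  have symm_inv_side : k' ⬝ᵥ ((S⁻¹ * (S - T) * T⁻¹) *ᵥ y) =
      (S⁻¹ *ᵥ k') ⬝ᵥ ((S - T) *ᵥ (T⁻¹ *ᵥ y)) := by
    rw [← mulVec_mulVec, ← mulVec_mulVec, dotProduct_mulVec, ← mulVec_transpose, hS.inv.eq]
  calc k' ⬝ᵥ (S⁻¹ *ᵥ y) - k ⬝ᵥ (T⁻¹ *ᵥ y)
      = k' ⬝ᵥ ((S⁻¹ - T⁻¹) *ᵥ y) + (k' - k) ⬝ᵥ (T⁻¹ *ᵥ y) := by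
        simp only [sub_mulVec, dotProduct_sub, sub_dotProduct]; ring
    _ = _ := by rw [resolvent, neg_mulVec, dotProduct_neg, symm_inv_side]; ring

end Matrix

/-- the prediction-difference decomposition bound
(f̃ − f)² ≤ 2‖(K̃ + nλI)⁻¹k̃'‖₂²·‖(K̃ − K)(K + nλI)⁻¹y‖₂² + 2((k̃'−k')ᵀ(K + nλI)⁻¹y)². -/
theorem pred_diff_decomposition_bound {n : ℕ}
    {K Kt : Matrix (Fin n) (Fin n) ℝ} (hK : K.PosSemidef) (hKt : Kt.PosSemidef)
    (k kt y : Fin n → ℝ) (lam : ℝ) (hlam : 0 < lam) :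
    (kt ⬝ᵥ ((Kt + ((n : ℝ) * lam) • (1 : Matrix (Fin n) (Fin n) ℝ))⁻¹ *ᵥ y) -
        k ⬝ᵥ ((K + ((n : ℝ) * lam) • (1 : Matrix (Fin n) (Fin n) ℝ))⁻¹ *ᵥ y)) ^ 2 ≤
      2 * ((((Kt + ((n : ℝ) * lam) • (1 : Matrix (Fin n) (Fin n) ℝ))⁻¹ *ᵥ kt) ⬝ᵥ
            ((Kt + ((n : ℝ) * lam) • (1 : Matrix (Fin n) (Fin n) ℝ))⁻¹ *ᵥ kt)) *
          (((Kt - K) *ᵥ ((K + ((n : ℝ) * lam) • (1 : Matrix (Fin n) (Fin n) ℝ))⁻¹ *ᵥ y)) ⬝ᵥ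
            ((Kt - K) *ᵥ ((K + ((n : ℝ) * lam) • (1 : Matrix (Fin n) (Fin n) ℝ))⁻¹ *ᵥ y)))) +
        2 * ((kt - k) ⬝ᵥ ((K + ((n : ℝ) * lam) • (1 : Matrix (Fin n) (Fin n) ℝ))⁻¹ *ᵥ y)) ^ 2 := by
  rcases Nat.eq_zero_or_pos n with rfl | hn
  · simp [dotProduct]
  have hc : 0 < (n : ℝ) * lam := by positivity
  set c := (n : ℝ) * lam
  have hS := hKt.posDef_add_smul_one hc
  have hT := hK.posDef_add_smul_one hc
  have hST : IsUnit (Kt + c • 1) ↔ IsUnit (K + c • 1) := iff_of_true hS.isUnit hT.isUnit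
  have hSsymm : (Kt + c • 1).IsSymm := isHermitian_iff_isSymm.mp hS.isHermitian
  rw [dotProduct_inv_mulVec_sub_dotProduct_inv_mulVec hST hSsymm, add_sub_add_right_eq_sub]
  set a := ((Kt + c • 1)⁻¹ *ᵥ kt) ⬝ᵥ ((Kt - K) *ᵥ ((K + c • 1)⁻¹ *ᵥ y))
  have cauchy_schwarz := dotProduct_sq_le_dotProduct_self_mul_dotProduct_self
    ((Kt + c • 1)⁻¹ *ᵥ kt) ((Kt - K) *ᵥ ((K + c • 1)⁻¹ *ᵥ y))
  linear_combination
    add_sq_le (a := (kt - k) ⬝ᵥ ((K + c • 1)⁻¹ *ᵥ y)) (b := -a) + 2 * cauchy_schwarz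
end

section
/- Let K, K̃ ∈ ℝ^{n×n} be symmetric positive semidefinite, y ∈ ℝⁿ, λ > 0, and suppose the test point x' is drawn uniformly at random from the fixed training set {x_1,…,x_n}, so that the corresponding kernel vectors satisfy E_{x'}[k'k'ᵀ] = K²/n, E_{x'}[k̃'k̃'ᵀ] = K̃²/n, and E_{x'}[k̃'k'ᵀ] = K̃K/n. Then E_{x'}[ ( f̃_λ(x') − f_λ(x') )² ] ≥ (1/n)·( nλ/(‖K̃‖₂ + nλ) )²·‖(K̃ − K)(K + nλI_n)^{-1}y‖₂², where f_λ(x') = k'ᵀ(K + nλI_n)^{-1}y and f̃_λ(x') = k̃'ᵀ(K̃ + nλI_n)^{-1}y. -/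
open Matrix

noncomputable section

/-- Spectral norm of a square real matrix. -/
noncomputable def specNorm {m : ℕ} (A : Matrix (Fin m) (Fin m) ℝ) : ℝ :=
  ‖LinearMap.toContinuousLinearMap (Matrix.toEuclideanLin A)‖

/-!
Write `c = nλ`, `M = K + c I` and `M̃ = K̃ + c I`. Since `K̃` is symmetric, the `i`-th summand is
the `i`-th coordinate of `K̃ M̃⁻¹ y - K M⁻¹ y = c (M⁻¹ - M̃⁻¹) y = c M̃⁻¹ w` with
`w = (K̃ - K) M⁻¹ y` (resolvent identity), so the left side is `c² ‖M̃⁻¹ w‖² / n`.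
The bound `‖w‖ ≤ ‖M̃‖₂ ‖M̃⁻¹ w‖ ≤ (‖K̃‖₂ + c) ‖M̃⁻¹ w‖` finishes the proof.
-/

namespace Matrix

variable {ι R : Type*}

lemma PosSemidef.posDef_add_smul_one_s14 [DecidableEq ι] {A : Matrix ι ι ℝ} (hA : A.PosSemidef)
    {c : ℝ} (hc : 0 < c) : (A + c • 1).PosDef :=
  PosDef.posSemidef_add hA (PosDef.one.smul hc)

lemma PosSemidef.isSymm {A : Matrix ι ι ℝ} (hA : A.PosSemidef) : A.IsSymm :=
  isHermitian_iff_isSymm.mp hA.isHermitian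

lemma PosDef.isUnit_det [Fintype ι] [DecidableEq ι] {A : Matrix ι ι ℝ} (hA : A.PosDef) :
    IsUnit A.det :=
  isUnit_iff_ne_zero.mpr hA.det_pos.ne'

variable [Fintype ι]

lemma IsSymm.col_dotProduct [CommSemiring R] {A : Matrix ι ι R} (hA : A.IsSymm) (i : ι)
    (v : ι → R) : (fun j => A j i) ⬝ᵥ v = (A *ᵥ v) i := by
  simp only [mulVec, hA.apply]

variable [DecidableEq ι]

lemma mulVec_mulVec_nonsing_inv [CommRing R] {M : Matrix ι ι R} (h : IsUnit M.det)
    (y : ι → R) : M *ᵥ (M⁻¹ *ᵥ y) = y := by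
  rw [mulVec_mulVec, mul_nonsing_inv _ h, one_mulVec]

lemma mulVec_inv_add_smul_one_mulVec [CommRing R] (A : Matrix ι ι R) {c : R}
    (h : IsUnit (A + c • 1).det) (y : ι → R) :
    A *ᵥ ((A + c • 1)⁻¹ *ᵥ y) = y - c • ((A + c • 1)⁻¹ *ᵥ y) := by
  rw [eq_sub_iff_add_eq]
  calc A *ᵥ ((A + c • 1)⁻¹ *ᵥ y) + c • ((A + c • 1)⁻¹ *ᵥ y)
      = (A + c • 1) *ᵥ ((A + c • 1)⁻¹ *ᵥ y) := by rw [add_mulVec, smul_mulVec, one_mulVec]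
    _ = y := mulVec_mulVec_nonsing_inv h y

lemma mulVec_inv_add_smul_one_mulVec_sub [CommRing R] {A B : Matrix ι ι R} {c : R}
    (hA : IsUnit (A + c • 1).det) (hB : IsUnit (B + c • 1).det) (y : ι → R) :
    B *ᵥ ((B + c • 1)⁻¹ *ᵥ y) - A *ᵥ ((A + c • 1)⁻¹ *ᵥ y) =
      c • ((B + c • 1)⁻¹ *ᵥ ((B - A) *ᵥ ((A + c • 1)⁻¹ *ᵥ y))) := by
  have resolvent : (B + c • 1)⁻¹ * (B - A) * (A + c • 1)⁻¹ = (A + c • 1)⁻¹ - (B + c • 1)⁻¹ := by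
    rw [← add_sub_add_right_eq_sub B A (c • 1), Matrix.mul_sub, Matrix.sub_mul,
      nonsing_inv_mul _ hB, Matrix.one_mul, Matrix.mul_assoc, mul_nonsing_inv _ hA, Matrix.mul_one]
  rw [mulVec_inv_add_smul_one_mulVec A hA, mulVec_inv_add_smul_one_mulVec B hB, mulVec_mulVec,
    mulVec_mulVec, resolvent, sub_mulVec, smul_sub]
  abel

end Matrix

open scoped Matrix.Norms.L2Operator

lemma specNorm_eq_l2_opNorm {m : ℕ} (A : Matrix (Fin m) (Fin m) ℝ) : specNorm A = ‖A‖ := rfl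

lemma specNorm_nonneg {m : ℕ} (A : Matrix (Fin m) (Fin m) ℝ) : 0 ≤ specNorm A :=
  norm_nonneg _

lemma specNorm_add_smul_one_le {m : ℕ} (A : Matrix (Fin m) (Fin m) ℝ) (c : ℝ) :
    specNorm (A + c • 1) ≤ specNorm A + |c| := by
  simp only [specNorm_eq_l2_opNorm]
  refine (norm_add_le _ _).trans (add_le_add le_rfl ?_)
  rw [smul_one_eq_diagonal, l2_opNorm_diagonal]
  exact pi_norm_const_le c

lemma dotProduct_self_eq_norm_toLp_sq {ι : Type*} [Fintype ι] (z : ι → ℝ) :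
    z ⬝ᵥ z = ‖WithLp.toLp 2 z‖ ^ 2 := by
  rw [EuclideanSpace.real_norm_sq_eq]
  simp only [dotProduct, sq]

lemma dotProduct_self_mulVec_le {m : ℕ} (A : Matrix (Fin m) (Fin m) ℝ) (z : Fin m → ℝ) :
    (A *ᵥ z) ⬝ᵥ (A *ᵥ z) ≤ specNorm A ^ 2 * (z ⬝ᵥ z) := by
  rw [dotProduct_self_eq_norm_toLp_sq, dotProduct_self_eq_norm_toLp_sq, ← mul_pow]
  gcongr
  exact A.l2_opNorm_mulVec (WithLp.toLp 2 z)

lemma dotProduct_self_mulVec_add_smul_one_le {m : ℕ} (A : Matrix (Fin m) (Fin m) ℝ) {c : ℝ}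
    (hc : 0 ≤ c) (z : Fin m → ℝ) :
    ((A + c • 1) *ᵥ z) ⬝ᵥ ((A + c • 1) *ᵥ z) ≤ (specNorm A + c) ^ 2 * (z ⬝ᵥ z) := by
  refine (dotProduct_self_mulVec_le _ z).trans ?_
  have hnorm : specNorm (A + c • 1) ≤ specNorm A + c := by
    simpa only [abs_of_nonneg hc] using specNorm_add_smul_one_le A c
  gcongr
  · exact dotProduct_star_self_nonneg z
  · exact specNorm_nonneg _

/-- for a test point drawn uniformly from the training set
(so the kernel vectors k', k̃' are the corresponding columns of K, K̃, and
E_{x'}[k'k'ᵀ] = K²/n, E_{x'}[k̃'k̃'ᵀ] = K̃²/n, E_{x'}[k̃'k'ᵀ] = K̃K/n hold),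
E_{x'}[(f̃_λ(x') − f_λ(x'))²] ≥ (1/n)·(nλ/(‖K̃‖₂+nλ))²·‖(K̃−K)(K+nλI)⁻¹y‖₂². -/
theorem lower_bound_uniform_test_point {n : ℕ} (hn : 0 < n)
    {K Kt : Matrix (Fin n) (Fin n) ℝ} (hK : K.PosSemidef) (hKt : Kt.PosSemidef)
    (y : Fin n → ℝ) (lam : ℝ) (hlam : 0 < lam) :
    (n : ℝ)⁻¹ *
        ∑ i : Fin n,
          ((fun j => Kt j i) ⬝ᵥ
              ((Kt + ((n : ℝ) * lam) • (1 : Matrix (Fin n) (Fin n) ℝ))⁻¹ *ᵥ y) -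
            (fun j => K j i) ⬝ᵥ
              ((K + ((n : ℝ) * lam) • (1 : Matrix (Fin n) (Fin n) ℝ))⁻¹ *ᵥ y)) ^ 2 ≥
      (n : ℝ)⁻¹ * ((n : ℝ) * lam / (specNorm Kt + (n : ℝ) * lam)) ^ 2 *
        (((Kt - K) *ᵥ ((K + ((n : ℝ) * lam) • (1 : Matrix (Fin n) (Fin n) ℝ))⁻¹ *ᵥ y)) ⬝ᵥ
          ((Kt - K) *ᵥ ((K + ((n : ℝ) * lam) • (1 : Matrix (Fin n) (Fin n) ℝ))⁻¹ *ᵥ y))) := by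
  set c := (n : ℝ) * lam
  have hc : 0 < c := mul_pos (Nat.cast_pos.mpr hn) hlam
  have hM : IsUnit (K + c • 1).det := (hK.posDef_add_smul_one_s14 hc).isUnit_det
  have hMt : IsUnit (Kt + c • 1).det := (hKt.posDef_add_smul_one_s14 hc).isUnit_det
  set w := (Kt - K) *ᵥ ((K + c • 1)⁻¹ *ᵥ y)
  set z := (Kt + c • 1)⁻¹ *ᵥ w
  have hterm : ∀ i, (fun j => Kt j i) ⬝ᵥ ((Kt + c • 1)⁻¹ *ᵥ y) -
      (fun j => K j i) ⬝ᵥ ((K + c • 1)⁻¹ *ᵥ y) = c * z i := fun i => by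
    rw [hKt.isSymm.col_dotProduct, hK.isSymm.col_dotProduct, ← Pi.sub_apply,
      mulVec_inv_add_smul_one_mulVec_sub hM hMt, Pi.smul_apply, smul_eq_mul]
  have hw : w ⬝ᵥ w ≤ (specNorm Kt + c) ^ 2 * (z ⬝ᵥ z) := by
    simpa only [z, mulVec_mulVec_nonsing_inv hMt] using
      dotProduct_self_mulVec_add_smul_one_le Kt hc.le z
  have hsum : ∑ i, ((fun j => Kt j i) ⬝ᵥ ((Kt + c • 1)⁻¹ *ᵥ y) -
      (fun j => K j i) ⬝ᵥ ((K + c • 1)⁻¹ *ᵥ y)) ^ 2 = c ^ 2 * (z ⬝ᵥ z) := by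
    simp only [hterm, mul_pow, ← Finset.mul_sum]
    simp only [dotProduct, sq]
  have hpos : 0 < (specNorm Kt + c) ^ 2 := by
    have := specNorm_nonneg Kt
    positivity
  rw [hsum, ge_iff_le, mul_assoc]
  gcongr _ * ?_
  rw [div_pow, div_mul_eq_mul_div, div_le_iff₀ hpos]
  exact (mul_le_mul_of_nonneg_left hw (sq_nonneg c)).trans_eq (by ring)
end
end

section
/- Let v_1,…,v_s be i.i.d. random feature vectors and ψ a feature map satisfying the unbiasedness E_v[ψ(x;v)ψ(x';v)] = κ(x,x') together with ψ²(·;·) = 1 identically (as holds for the random sign feature ψ(x;v) = sgn(xᵀv) with the angular similarity kernel). For fixed points x_1,…,x_n with kernel matrix K and K̃ = ΨΨᵀ, it holds that E_{V_s}[ (K̃ − K)² ] = (n/s)·K − (1/s)·K². -/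
/-!
Entrywise, `K̃ - K` is a centred empirical mean: `(K̃ - K)ₐᵦ = (1/s) ∑ₗ (ψₐψᵦ(vₗ) - κₐᵦ)`. Hence
`E[((K̃ - K)²)ₐᵦ] = ∑ₖ Cov(mean of ψₐψₖ, mean of ψₖψᵦ)`, and by independence of the `vₗ` only the
diagonal terms survive, leaving `(1/s) Cov(ψₐψₖ, ψₖψᵦ)`. Since `ψₖ² = 1`, the product `ψₐψₖ·ψₖψᵦ`
is `ψₐψᵦ`, so this covariance is `κₐᵦ - κₐₖκₖᵦ`; summing over `k` gives `(n/s) K - (1/s) K²`.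
-/

open MeasureTheory Matrix

noncomputable section

namespace ProbabilityTheory

lemma covariance_fun_sum_pi {ι : Type*} [Fintype ι] {Ω : ι → Type*}
    {mΩ : ∀ i, MeasurableSpace (Ω i)} {μ : (i : ι) → Measure (Ω i)}
    [∀ i, IsProbabilityMeasure (μ i)] {X Y : (i : ι) → Ω i → ℝ}
    (hX : ∀ i, MemLp (X i) 2 (μ i)) (hY : ∀ i, MemLp (Y i) 2 (μ i)) :
    cov[fun ω ↦ ∑ i, X i (ω i), fun ω ↦ ∑ i, Y i (ω i); Measure.pi μ] =
      ∑ i, cov[X i, Y i; μ i] := by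
  have hX' (i : ι) : MemLp (fun ω : (i : ι) → Ω i ↦ X i (ω i)) 2 (Measure.pi μ) :=
    (hX i).comp_measurePreserving (measurePreserving_eval μ i)
  have hY' (i : ι) : MemLp (fun ω : (i : ι) → Ω i ↦ Y i (ω i)) 2 (Measure.pi μ) :=
    (hY i).comp_measurePreserving (measurePreserving_eval μ i)
  rw [covariance_fun_sum_fun_sum hX' hY']
  refine Finset.sum_congr rfl fun i _ ↦ ?_
  rw [Finset.sum_eq_single i]
  · rw [← covariance_map_fun, (measurePreserving_eval μ i).map_eq]
    · rw [(measurePreserving_eval μ i).map_eq]; exact (hX i).aestronglyMeasurable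
    · rw [(measurePreserving_eval μ i).map_eq]; exact (hY i).aestronglyMeasurable
    · exact (measurable_pi_apply i).aemeasurable
  · intro j _ hji
    -- `X i` and `Y j` are read off the independent family of pairs `(X k, Y k)`.
    have hindep := iIndepFun_pi (X := fun i ω ↦ (X i ω, Y i ω)) (μ := μ)
      fun i ↦ (hX i).aestronglyMeasurable.aemeasurable.prodMk
        (hY i).aestronglyMeasurable.aemeasurable
    exact ((hindep.indepFun hji.symm).comp measurable_fst measurable_snd).covariance_eq_zero
      (hX' i) (hY' j)
  · simp

variable {ι V : Type*} [Fintype ι] [MeasurableSpace V] {p : Measure V} [IsProbabilityMeasure p]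
  {f g : V → ℝ}

def empiricalMean (f : V → ℝ) (ω : ι → V) : ℝ :=
  (Fintype.card ι : ℝ)⁻¹ * ∑ i, f (ω i)

lemma memLp_empiricalMean (hf : MemLp f 2 p) :
    MemLp (empiricalMean f) 2 (Measure.pi fun _ : ι ↦ p) := by
  unfold empiricalMean
  exact (memLp_finsetSum _ fun i _ ↦
    hf.comp_measurePreserving (measurePreserving_eval (fun _ : ι ↦ p) i)).const_mul _

lemma integral_empiricalMean [Nonempty ι] (hf : Integrable f p) :
    ∫ ω, empiricalMean f ω ∂(Measure.pi fun _ : ι ↦ p) = ∫ v, f v ∂p := by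
  unfold empiricalMean
  rw [integral_const_mul, integral_finsetSum _ fun i _ ↦ integrable_comp_eval hf]
  simp only [integral_comp_eval (μ := fun _ ↦ p) hf.aestronglyMeasurable, Finset.sum_const,
    Finset.card_univ, nsmul_eq_mul]
  field_simp

lemma covariance_empiricalMean (hf : MemLp f 2 p) (hg : MemLp g 2 p) :
    cov[empiricalMean f, empiricalMean g; Measure.pi fun _ : ι ↦ p] =
      (Fintype.card ι : ℝ)⁻¹ * cov[f, g; p] := by
  unfold empiricalMean
  simp only [covariance_const_mul_left, covariance_const_mul_right,
    covariance_fun_sum_pi (fun _ ↦ hf) (fun _ ↦ hg), Finset.sum_const, Finset.card_univ,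
    nsmul_eq_mul]
  rcases (Fintype.card ι).eq_zero_or_pos with h | h
  · simp [h]
  · field_simp

lemma integral_sub_mul_sub_empiricalMean [Nonempty ι] (hf : MemLp f 2 p) (hg : MemLp g 2 p) :
    ∫ ω, (empiricalMean f ω - ∫ v, f v ∂p) * (empiricalMean g ω - ∫ v, g v ∂p)
        ∂(Measure.pi fun _ : ι ↦ p) =
      (Fintype.card ι : ℝ)⁻¹ * cov[f, g; p] := by
  rw [← integral_empiricalMean (ι := ι) (hf.integrable one_le_two),
    ← integral_empiricalMean (ι := ι) (hg.integrable one_le_two)]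
  exact covariance_empiricalMean hf hg

end ProbabilityTheory

open ProbabilityTheory

section SignFeatures

lemma featMat_mul_transpose {d n s : ℕ} {V : Type*} (ψ : (Fin d → ℝ) → V → ℝ)
    (X : Fin n → (Fin d → ℝ)) (vs : Fin s → V) :
    featMat ψ X vs * (featMat ψ X vs)ᵀ =
      Matrix.of fun a b ↦ empiricalMean (fun v ↦ ψ (X a) v * ψ (X b) v) vs := by
  ext a b
  simp only [featMat, empiricalMean, mul_apply, transpose_apply, of_apply, Fintype.card_fin,
    Finset.mul_sum]
  have hsqrt : ((√s)⁻¹ * (√s)⁻¹ : ℝ) = (s : ℝ)⁻¹ := by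
    rw [← mul_inv, Real.mul_self_sqrt (Nat.cast_nonneg s)]
  refine Finset.sum_congr rfl fun l _ ↦ ?_
  linear_combination ψ (X a) (vs l) * ψ (X b) (vs l) * hsqrt

variable {d : ℕ} {V : Type*} [MeasurableSpace V] {p : Measure V} [IsProbabilityMeasure p]
  {ψ : (Fin d → ℝ) → V → ℝ} {κ : (Fin d → ℝ) → (Fin d → ℝ) → ℝ}

lemma memLp_mul_of_sq_eq_one (hm : ∀ x, Measurable (ψ x)) (hsq : ∀ x v, ψ x v ^ 2 = 1)
    (x y : Fin d → ℝ) : MemLp (fun v ↦ ψ x v * ψ y v) 2 p :=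
  MemLp.of_bound ((hm x).mul (hm y)).aestronglyMeasurable 1 <| ae_of_all _ fun v ↦ by
    rw [Real.norm_eq_abs, ← sq_le_one_iff_abs_le_one, mul_pow, hsq, hsq, one_mul]

lemma covariance_mul_mul_of_sq_eq_one (hm : ∀ x, Measurable (ψ x))
    (hunbias : ∀ x x', ∫ v, ψ x v * ψ x' v ∂p = κ x x') (hsq : ∀ x v, ψ x v ^ 2 = 1)
    (x y z : Fin d → ℝ) :
    cov[fun v ↦ ψ x v * ψ y v, fun v ↦ ψ y v * ψ z v; p] = κ x z - κ x y * κ y z := by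
  rw [covariance_eq_sub (memLp_mul_of_sq_eq_one hm hsq x y) (memLp_mul_of_sq_eq_one hm hsq y z)]
  have hprod : ((fun v ↦ ψ x v * ψ y v) * fun v ↦ ψ y v * ψ z v) = fun v ↦ ψ x v * ψ z v := by
    ext v
    simp only [Pi.mul_apply]
    linear_combination ψ x v * ψ z v * hsq y v
  rw [hprod, hunbias, hunbias, hunbias]

end SignFeatures

/-- for an unbiased feature map with ψ² ≡ 1 (e.g. random sign
features), E_{V_s}[(K̃ − K)²] = (n/s)·K − (1/s)·K². -/
theorem sign_feature_squared_error_expectation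
    {d n s : ℕ} (hs : 0 < s) {V : Type*} [MeasurableSpace V]
    (p : Measure V) [IsProbabilityMeasure p]
    (ψ : (Fin d → ℝ) → V → ℝ) (hm : ∀ x, Measurable (ψ x))
    (κ : (Fin d → ℝ) → (Fin d → ℝ) → ℝ)
    (hunbias : ∀ x x', ∫ v, ψ x v * ψ x' v ∂p = κ x x')
    (hsq : ∀ x v, (ψ x v) ^ 2 = 1)
    (X : Fin n → (Fin d → ℝ)) :
    Matrix.of (fun i j =>
        ∫ vs : Fin s → V,
          ((featMat ψ X vs * (featMat ψ X vs)ᵀ - kerMat κ X) *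
            (featMat ψ X vs * (featMat ψ X vs)ᵀ - kerMat κ X)) i j
          ∂(Measure.pi fun _ : Fin s => p)) =
      ((n : ℝ) / s) • kerMat κ X - ((s : ℝ))⁻¹ • (kerMat κ X * kerMat κ X) := by
  have : Nonempty (Fin s) := Fin.pos_iff_nonempty.mp hs
  set F : Fin n → Fin n → V → ℝ := fun a b v ↦ ψ (X a) v * ψ (X b) v
  have hF (a b : Fin n) : MemLp (F a b) 2 p := memLp_mul_of_sq_eq_one hm hsq (X a) (X b)
  ext a b
  calc _ = ∑ k, ∫ vs, (empiricalMean (F a k) vs - ∫ v, F a k v ∂p) *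
          (empiricalMean (F k b) vs - ∫ v, F k b v ∂p) ∂(Measure.pi fun _ : Fin s => p) := by
        simp only [featMat_mul_transpose, kerMat, of_apply, mul_apply, Matrix.sub_apply, F,
          hunbias]
        refine integral_finsetSum _ fun k _ ↦ ?_
        exact (((memLp_empiricalMean (hF a k)).sub (memLp_const _)).integrable_mul
            ((memLp_empiricalMean (hF k b)).sub (memLp_const _)))
    _ = ∑ k, (s : ℝ)⁻¹ * (κ (X a) (X b) - κ (X a) (X k) * κ (X k) (X b)) := by
        simp only [integral_sub_mul_sub_empiricalMean (hF _ _) (hF _ _), Fintype.card_fin, F,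
          covariance_mul_mul_of_sq_eq_one hm hunbias hsq]
    _ = _ := by
        simp only [Matrix.sub_apply, Matrix.smul_apply, kerMat, of_apply, mul_apply, smul_eq_mul,
          ← Finset.mul_sum, Finset.sum_sub_distrib, Finset.sum_const, Finset.card_univ,
          Fintype.card_fin, nsmul_eq_mul]
        ring
end
end

section
/- Let v_1,…,v_s be i.i.d. random feature vectors and ψ a feature map satisfying unbiasedness E_v[ψ(x;v)ψ(x';v)] = κ(x,x') and ψ²(·;·) = 1 identically. For fixed points x_1,…,x_n with kernel matrix K and Ψ ∈ ℝ^{n×s} the random feature matrix, it holds that E_{V_s}[ ΨΨᵀΨΨᵀ ] = ((s−1)/s)·K² + (n/s)·K. -/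
open MeasureTheory Matrix

noncomputable section

/-!
As `Ψ Ψᵀ Ψ Ψᵀ = (Ψ Ψᵀ)²` and `(Ψ Ψᵀ)ᵢₖ = s⁻¹ ∑ₗ ψ(xᵢ; vₗ) ψ(xₖ; vₗ)`, the `(i, j)` entry is
`s⁻² ∑ₖ (∑ₗ aₖ(vₗ)) (∑ₘ bₖ(vₘ))` with `aₖ = ψ(xᵢ; ·) ψ(xₖ; ·)` and `bₖ = ψ(xₖ; ·) ψ(xⱼ; ·)`.
Of the `s²` pairs `(l, m)`, the `s` diagonal ones have mean `E[aₖ bₖ] = κ(xᵢ, xⱼ)` because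
`ψ(xₖ; ·)² = 1`, and the `s (s - 1)` others factor by independence into `κ(xᵢ, xₖ) κ(xₖ, xⱼ)`.
Summing over `k` gives `(n / s) K + ((s - 1) / s) K²`.
-/

open ProbabilityTheory

lemma integral_pi_comp_eval_mul_comp_eval {ι : Type*} [Fintype ι] {E : ι → Type*}
    {mE : ∀ i, MeasurableSpace (E i)} (μ : (i : ι) → Measure (E i))
    [∀ i, IsProbabilityMeasure (μ i)] {i j : ι} (hij : i ≠ j) {f : E i → ℝ} {g : E j → ℝ}
    (hf : AEStronglyMeasurable f (μ i)) (hg : AEStronglyMeasurable g (μ j)) :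
    ∫ x, f (x i) * g (x j) ∂Measure.pi μ = (∫ y, f y ∂μ i) * ∫ y, g y ∂μ j := by
  have hindep : IndepFun (fun x : (i : ι) → E i ↦ x i) (fun x ↦ x j) (Measure.pi μ) :=
    (iIndepFun_pi (X := fun _ ↦ id) fun _ ↦ aemeasurable_id).indepFun hij
  rw [hindep.integral_fun_comp_mul_comp (measurable_pi_apply i).aemeasurable
      (measurable_pi_apply j).aemeasurable
      (by rwa [(measurePreserving_eval μ i).map_eq]) (by rwa [(measurePreserving_eval μ j).map_eq]),
    integral_comp_eval hf, integral_comp_eval hg]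

lemma sum_sum_ite_eq {ι R : Type*} [Fintype ι] [DecidableEq ι] [CommRing R] (a b : R) :
    ∑ l : ι, ∑ m : ι, (if l = m then a else b) =
      Fintype.card ι * a + (Fintype.card ι * (Fintype.card ι - 1)) * b := by
  have h (l m : ι) : (if l = m then a else b) = b + if l = m then a - b else 0 := by
    split_ifs <;> abel
  simp only [h, Finset.sum_add_distrib, Finset.sum_ite_eq, Finset.mem_univ, if_true,
    Finset.sum_const, Finset.card_univ, nsmul_eq_mul]
  ring

lemma integral_sum_mul_sum_pi {ι V : Type*} [Fintype ι] [MeasurableSpace V] (μ : Measure V)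
    [IsProbabilityMeasure μ] {f g : V → ℝ} (hf : MemLp f 2 μ) (hg : MemLp g 2 μ) :
    ∫ x : ι → V, (∑ l, f (x l)) * (∑ m, g (x m)) ∂Measure.pi (fun _ ↦ μ) =
      Fintype.card ι * (∫ v, f v * g v ∂μ) +
        (Fintype.card ι * (Fintype.card ι - 1)) * ((∫ v, f v ∂μ) * ∫ v, g v ∂μ) := by
  classical
  have hint (l m : ι) : Integrable (fun x : ι → V ↦ f (x l) * g (x m)) (Measure.pi fun _ ↦ μ) :=
    (hf.comp_measurePreserving (measurePreserving_eval _ l)).integrable_mul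
      (hg.comp_measurePreserving (measurePreserving_eval _ m))
  have hterm (l m : ι) : ∫ x : ι → V, f (x l) * g (x m) ∂Measure.pi (fun _ ↦ μ) =
      if l = m then ∫ v, f v * g v ∂μ else (∫ v, f v ∂μ) * ∫ v, g v ∂μ := by
    split_ifs with hlm
    · subst hlm
      exact integral_comp_eval (μ := fun _ : ι ↦ μ) (f := f * g) (hf.1.mul hg.1)
    · exact integral_pi_comp_eval_mul_comp_eval _ hlm hf.1 hg.1
  simp_rw [Finset.sum_mul_sum]
  rw [integral_finsetSum _ fun l _ ↦ integrable_finsetSum _ fun m _ ↦ hint l m]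
  simp_rw [integral_finsetSum _ fun m _ ↦ hint _ m, hterm]
  exact sum_sum_ite_eq _ _

lemma memLp_sum_comp_eval {ι V : Type*} [Fintype ι] [MeasurableSpace V] (μ : Measure V)
    [IsProbabilityMeasure μ] {q : ENNReal} {f : V → ℝ} (hf : MemLp f q μ) :
    MemLp (fun x : ι → V ↦ ∑ l, f (x l)) q (Measure.pi fun _ ↦ μ) :=
  memLp_finsetSum _ fun l _ ↦ hf.comp_measurePreserving (measurePreserving_eval _ l)

lemma featMat_mul_transpose_apply {d n s : ℕ} {V : Type*} (ψ : (Fin d → ℝ) → V → ℝ)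
    (X : Fin n → (Fin d → ℝ)) (vs : Fin s → V) (i k : Fin n) :
    (featMat ψ X vs * (featMat ψ X vs)ᵀ) i k =
      (s : ℝ)⁻¹ * ∑ l, ψ (X i) (vs l) * ψ (X k) (vs l) := by
  have hsqrt : (Real.sqrt s)⁻¹ * (Real.sqrt s)⁻¹ = (s : ℝ)⁻¹ := by
    rw [← mul_inv, Real.mul_self_sqrt (Nat.cast_nonneg s)]
  simp only [featMat, mul_apply, transpose_apply, of_apply, Finset.mul_sum, ← hsqrt]
  ring_nf

lemma featMat_mul_transpose_mul_featMat_mul_transpose_apply {d n s : ℕ} {V : Type*}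
    (ψ : (Fin d → ℝ) → V → ℝ) (X : Fin n → (Fin d → ℝ)) (vs : Fin s → V) (i j : Fin n) :
    (featMat ψ X vs * (featMat ψ X vs)ᵀ * featMat ψ X vs * (featMat ψ X vs)ᵀ) i j =
      ∑ k, (s : ℝ)⁻¹ * (s : ℝ)⁻¹ *
        ((∑ l, ψ (X i) (vs l) * ψ (X k) (vs l)) * ∑ m, ψ (X k) (vs m) * ψ (X j) (vs m)) := by
  rw [Matrix.mul_assoc (featMat ψ X vs * (featMat ψ X vs)ᵀ), mul_apply]
  simp only [featMat_mul_transpose_apply]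
  ring_nf

theorem sign_feature_fourth_moment_general
    {d n s : ℕ} {V : Type*} [MeasurableSpace V]
    (p : Measure V) [IsProbabilityMeasure p]
    (ψ : (Fin d → ℝ) → V → ℝ) (hm : ∀ x, Measurable (ψ x))
    (κ : (Fin d → ℝ) → (Fin d → ℝ) → ℝ)
    (hunbias : ∀ x x', ∫ v, ψ x v * ψ x' v ∂p = κ x x')
    (hsq : ∀ x v, (ψ x v) ^ 2 = 1)
    (X : Fin n → (Fin d → ℝ)) :
    Matrix.of (fun i j =>
        ∫ vs : Fin s → V,
          (featMat ψ X vs * (featMat ψ X vs)ᵀ * featMat ψ X vs *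
              (featMat ψ X vs)ᵀ) i j
          ∂(Measure.pi fun _ : Fin s => p)) =
      (((s : ℝ) - 1) / s) • (kerMat κ X * kerMat κ X) +
        ((n : ℝ) / s) • kerMat κ X := by
  have hmem (x x' : Fin d → ℝ) : MemLp (fun v ↦ ψ x v * ψ x' v) 2 p := by
    refine .of_bound ((hm x).mul (hm x')).aestronglyMeasurable 1 (ae_of_all _ fun v ↦ ?_)
    rw [Real.norm_eq_abs, ← Real.sqrt_sq_eq_abs, mul_pow, hsq, hsq, one_mul, Real.sqrt_one]
  have hcollapse (x y z : Fin d → ℝ) (v : V) :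
      ψ x v * ψ y v * (ψ y v * ψ z v) = ψ x v * ψ z v := by
    linear_combination ψ x v * ψ z v * hsq y v
  have hscale (a b : ℝ) : (s : ℝ)⁻¹ * (s : ℝ)⁻¹ * (s * a + (s * (s - 1)) * b) =
      (s : ℝ)⁻¹ * a + ((s : ℝ) - 1) / s * b := by
    rcases eq_or_ne (s : ℝ) 0 with hs | hs
    · simp [hs]
    · field_simp
  ext i j
  have hint (k : Fin n) : Integrable (fun vs : Fin s → V ↦
      (∑ l, ψ (X i) (vs l) * ψ (X k) (vs l)) * ∑ m, ψ (X k) (vs m) * ψ (X j) (vs m))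
      (Measure.pi fun _ ↦ p) :=
    (memLp_sum_comp_eval p (hmem _ _)).integrable_mul (memLp_sum_comp_eval p (hmem _ _))
  simp_rw [of_apply, featMat_mul_transpose_mul_featMat_mul_transpose_apply]
  rw [integral_finsetSum _ fun k _ ↦ (hint k).const_mul _]
  simp_rw [integral_const_mul, integral_sum_mul_sum_pi p (hmem _ _) (hmem _ _), hcollapse,
    hunbias, Fintype.card_fin, hscale, Finset.sum_add_distrib, ← Finset.mul_sum]
  simp only [Finset.sum_const, Finset.card_univ, Fintype.card_fin, nsmul_eq_mul, kerMat, smul_of,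
    Matrix.add_apply, Matrix.smul_apply, mul_apply, of_apply, smul_eq_mul, Pi.smul_apply]
  ring

/-- for an unbiased feature map with ψ² ≡ 1,
E_{V_s}[ΨΨᵀΨΨᵀ] = ((s−1)/s)·K² + (n/s)·K. -/
theorem sign_feature_fourth_moment
    {d n s : ℕ} (hs : 0 < s) {V : Type*} [MeasurableSpace V]
    (p : Measure V) [IsProbabilityMeasure p]
    (ψ : (Fin d → ℝ) → V → ℝ) (hm : ∀ x, Measurable (ψ x))
    (κ : (Fin d → ℝ) → (Fin d → ℝ) → ℝ)
    (hunbias : ∀ x x', ∫ v, ψ x v * ψ x' v ∂p = κ x x')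
    (hsq : ∀ x v, (ψ x v) ^ 2 = 1)
    (X : Fin n → (Fin d → ℝ)) :
    Matrix.of (fun i j =>
        ∫ vs : Fin s → V,
          (featMat ψ X vs * (featMat ψ X vs)ᵀ * featMat ψ X vs *
              (featMat ψ X vs)ᵀ) i j
          ∂(Measure.pi fun _ : Fin s => p)) =
      (((s : ℝ) - 1) / s) • (kerMat κ X * kerMat κ X) +
        ((n : ℝ) / s) • kerMat κ X :=
  sign_feature_fourth_moment_general p ψ hm κ hunbias hsq X
end
end
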